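/- For Φ real-valued of class C^n and x₀ ∈ (a,b), the diagonal entries of the Wronskian matrix of the functions 𝒴₀,…,𝒴ₙ at x = x₀ are 𝒴_m^(m)(x₀,x₀) = m!·Φ(x₀) for m odd and m! for m even; consequently the Wronskian 𝒲ₙ(x₀) = (∏_{k=0}^n k!)·Φ(x₀)^{(n+1)/2} if n is odd and (∏_{k=0}^n k!)·Φ(x₀)^{n/2} if n is even, and the functions 𝒴₀(x₀,·),…,𝒴ₙ(x₀,·) are linearly independent. -/

import Mathlib

noncomputable def genX (Φ : ℝ → ℝ) : ℕ → ℝ → ℝ → ℝ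
  | 0 => fun _ _ => 1
  | n + 1 => fun x₀ x =>
      (n + 1 : ℕ) * ∫ ξ in x₀..x, genX Φ n x₀ ξ * Φ ξ ^ ((-1 : ℤ) ^ (n + 1))

noncomputable def genXt (Φ : ℝ → ℝ) : ℕ → ℝ → ℝ → ℝ
  | 0 => fun _ _ => 1
  | n + 1 => fun x₀ x =>
      (n + 1 : ℕ) * ∫ ξ in x₀..x, genXt Φ n x₀ ξ * Φ ξ ^ (-((-1 : ℤ) ^ (n + 1)))

noncomputable def genY (Φ : ℝ → ℝ) (n : ℕ) (x₀ x : ℝ) : ℝ :=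
  if n % 2 = 1 then genXt Φ n x₀ x else genX Φ n x₀ x

noncomputable def genYt (Φ : ℝ → ℝ) (n : ℕ) (x₀ x : ℝ) : ℝ :=
  if n % 2 = 1 then genX Φ n x₀ x else genXt Φ n x₀ x

/-!
Because `genXt Φ = genX Φ⁻¹`, the functions `𝒴ₘ = genY Φ m x₀` satisfy the single recursion
`𝒴ₘ₊₁[Φ](x) = (m+1) ∫_{x₀}^x 𝒴ₘ[Φ⁻¹] Φ`, so `𝒴ₘ₊₁[Φ]' = (m+1) 𝒴ₘ[Φ⁻¹] Φ` and `𝒴ₘ₊₁[Φ](x₀) = 0`.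
Inducting on `m` for all admissible `Φ` at once (the hypotheses are stable under `Φ ↦ Φ⁻¹`),
Leibniz's rule shows that the derivatives of `𝒴ₘ` of order `< m` vanish at `x₀` and that the
`m`-th one is `m! Φ(x₀)^(m mod 2)`. The Wronskian matrix at `x₀` is therefore lower triangular,
its determinant is the product of these diagonal entries, and a nonzero Wronskian forces linear
independence.
-/

open Set Finset intervalIntegral
open scoped Nat Matrix

theorem genXt_eq_genX_inv (Φ : ℝ → ℝ) : genXt Φ = genX Φ⁻¹ := by
  funext m
  induction m with
  | zero => rfl
  | succ m ih => funext x₀ x; simp only [genX, genXt, ih, Pi.inv_apply, inv_zpow']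

theorem genY_zero (Φ : ℝ → ℝ) (x₀ : ℝ) : genY Φ 0 x₀ = fun _ => 1 := by
  funext x; simp [genY, genX]

theorem genY_succ (Φ : ℝ → ℝ) (m : ℕ) (x₀ : ℝ) :
    genY Φ (m + 1) x₀ = fun x => ((m + 1 : ℕ) : ℝ) * ∫ ξ in x₀..x, genY Φ⁻¹ m x₀ ξ * Φ ξ := by
  funext x
  rcases Nat.even_or_odd m with hm | hm
  · have hm' : m % 2 = 0 := Nat.even_iff.mp hm
    have hm1 : (m + 1) % 2 = 1 := by omega
    simp only [genY, hm1, hm', genXt, genXt_eq_genX_inv, hm.add_one.neg_one_pow, neg_neg,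
      zpow_one, if_true, zero_ne_one, if_false]
  · have hm' : m % 2 = 1 := Nat.odd_iff.mp hm
    have hm1 : (m + 1) % 2 = 0 := by omega
    simp only [genY, hm1, hm', genX, genXt_eq_genX_inv, inv_inv, hm.add_one.neg_one_pow,
      zpow_one, if_true, zero_ne_one, if_false]

theorem hasDerivAt_integral_of_continuousOn {s : Set ℝ} [s.OrdConnected] (hs : IsOpen s)
    {f : ℝ → ℝ} (hf : ContinuousOn f s) {x₀ x : ℝ} (hx₀ : x₀ ∈ s) (hx : x ∈ s) :
    HasDerivAt (fun y => ∫ t in x₀..y, f t) (f x) x :=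
  integral_hasDerivAt_right (hf.mono (‹s.OrdConnected›.uIcc_subset hx₀ hx)).intervalIntegrable
    (hf.stronglyMeasurableAtFilter hs x hx) (hf.continuousAt (hs.mem_nhds hx))

theorem iteratedDeriv_mul_eq_of_iteratedDeriv_lt_eq_zero {𝕜 𝔸 : Type*}
    [NontriviallyNormedField 𝕜] [NormedRing 𝔸] [NormedAlgebra 𝕜 𝔸] {f g : 𝕜 → 𝔸} {x : 𝕜}
    {k : ℕ} (hf : ContDiffAt 𝕜 k f x) (hg : ContDiffAt 𝕜 k g x)
    (h : ∀ i < k, iteratedDeriv i f x = 0) :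
    iteratedDeriv k (f * g) x = iteratedDeriv k f x * g x := by
  rw [iteratedDeriv_mul hf hg, Finset.sum_range_succ,
    Finset.sum_eq_zero fun i hi => by rw [h i (Finset.mem_range.mp hi), mul_zero, zero_mul]]
  simp

noncomputable def wronskianMatrix {𝕜 : Type*} [NontriviallyNormedField 𝕜] {N : ℕ}
    (f : Fin N → 𝕜 → 𝕜) (x : 𝕜) : Matrix (Fin N) (Fin N) 𝕜 :=
  Matrix.of fun i j => iteratedDeriv i (f j) x

theorem linearIndependent_of_det_wronskianMatrix_ne_zero {𝕜 : Type*}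
    [NontriviallyNormedField 𝕜] {n : ℕ} {f : Fin (n + 1) → 𝕜 → 𝕜} {x : 𝕜}
    (hf : ∀ j, ContDiffAt 𝕜 n (f j) x) (hW : (wronskianMatrix f x).det ≠ 0) :
    LinearIndependent 𝕜 f := by
  rw [Fintype.linearIndependent_iff]
  intro g hg
  suffices wronskianMatrix f x *ᵥ g = 0 from congrFun (Matrix.eq_zero_of_mulVec_eq_zero hW this)
  funext i
  calc (wronskianMatrix f x *ᵥ g) i = iteratedDeriv i (∑ j, g j • f j) x := by
        rw [iteratedDeriv_sum (f := fun j => g j • f j) fun j _ =>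
          ((hf j).of_le (by norm_cast; omega)).const_smul (g j)]
        simp [Matrix.mulVec, dotProduct, wronskianMatrix, mul_comm]
    _ = 0 := by simp [hg]

theorem sum_range_mod_two (N : ℕ) : ∑ k ∈ range N, k % 2 = N / 2 := by
  induction N with
  | zero => rfl
  | succ N ih => rw [Finset.sum_range_succ, ih]; omega

theorem prod_factorial_mul_pow_mod_two {R : Type*} [CommSemiring R] (c : R) (N : ℕ) :
    ∏ k ∈ range N, (k ! : R) * c ^ (k % 2) = (∏ k ∈ range N, (k ! : R)) * c ^ (N / 2) := by
  rw [prod_mul_distrib, prod_pow_eq_pow_sum, sum_range_mod_two]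

section genY

variable {s : Set ℝ} [s.OrdConnected] (hs : IsOpen s) {Φ : ℝ → ℝ} {x₀ : ℝ}
include hs

theorem hasDerivAt_genY_succ {m : ℕ} (hY : ContinuousOn (genY Φ⁻¹ m x₀) s)
    (hΦ : ContinuousOn Φ s) (hx₀ : x₀ ∈ s) {x : ℝ} (hx : x ∈ s) :
    HasDerivAt (genY Φ (m + 1) x₀) (((m + 1 : ℕ) : ℝ) * (genY Φ⁻¹ m x₀ x * Φ x)) x := by
  rw [genY_succ]
  exact (hasDerivAt_integral_of_continuousOn hs (hY.mul hΦ) hx₀ hx).const_mul _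

theorem contDiffOn_genY {k : ℕ} (hΦ : ContDiffOn ℝ k Φ s) (hΦ0 : ∀ y ∈ s, Φ y ≠ 0)
    (hx₀ : x₀ ∈ s) (m : ℕ) : ContDiffOn ℝ (k + 1) (genY Φ m x₀) s := by
  induction m generalizing Φ with
  | zero => rw [genY_zero]; exact contDiffOn_const
  | succ m ih =>
    have hY := ih (hΦ.inv hΦ0) fun y hy => inv_ne_zero (hΦ0 y hy)
    have hderiv (x) (hx : x ∈ s) :=
      hasDerivAt_genY_succ hs hY.continuousOn hΦ.continuousOn hx₀ hx
    rw [contDiffOn_succ_iff_deriv_of_isOpen hs]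
    refine ⟨fun x hx => (hderiv x hx).differentiableAt.differentiableWithinAt, by simp, ?_⟩
    exact (contDiffOn_const.mul ((hY.of_le le_self_add).mul hΦ)).congr fun x hx =>
      (hderiv x hx).deriv

theorem iteratedDeriv_genY {n : ℕ} (hΦ : ContDiffOn ℝ n Φ s) (hΦ0 : ∀ y ∈ s, Φ y ≠ 0)
    (hx₀ : x₀ ∈ s) {m : ℕ} (hm : m ≤ n) {j : ℕ} (hj : j ≤ m) :
    iteratedDeriv j (genY Φ m x₀) x₀ = if j = m then m ! * Φ x₀ ^ (m % 2) else 0 := by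
  induction m generalizing Φ j with
  | zero =>
    obtain rfl : j = 0 := by omega
    simp [genY_zero]
  | succ m ih =>
    have hΦinv : ContDiffOn ℝ n Φ⁻¹ s := hΦ.inv hΦ0
    have hΦ0inv : ∀ y ∈ s, Φ⁻¹ y ≠ 0 := fun y hy => inv_ne_zero (hΦ0 y hy)
    have hY := contDiffOn_genY hs hΦinv hΦ0inv hx₀ m
    cases j with
    | zero => simp [genY_succ]
    | succ i =>
      have hderiv : EqOn (deriv (genY Φ (m + 1) x₀))
          (fun x => ((m + 1 : ℕ) : ℝ) * (genY Φ⁻¹ m x₀ * Φ) x) s := fun x hx =>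
        (hasDerivAt_genY_succ hs hY.continuousOn hΦ.continuousOn hx₀ hx).deriv
      rw [iteratedDeriv_succ', hderiv.iteratedDeriv_of_isOpen hs i hx₀,
        iteratedDeriv_const_mul_field,
        iteratedDeriv_mul_eq_of_iteratedDeriv_lt_eq_zero
          ((hY.contDiffAt (hs.mem_nhds hx₀)).of_le (by norm_cast; omega))
          ((hΦ.contDiffAt (hs.mem_nhds hx₀)).of_le (by norm_cast; omega))
          fun q hq => by rw [ih hΦinv hΦ0inv (by omega) (by omega), if_neg (by omega)],
        ih hΦinv hΦ0inv (by omega) (by omega)]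
      by_cases him : i = m
      · subst him
        have hc := hΦ0 x₀ hx₀
        rw [if_pos rfl, if_pos rfl, Nat.factorial_succ, Pi.inv_apply]
        rcases Nat.mod_two_eq_zero_or_one i with h | h
        · rw [h, show (i + 1) % 2 = 1 by omega]
          push_cast
          ring
        · rw [h, show (i + 1) % 2 = 0 by omega]
          push_cast
          field_simp
      · rw [if_neg him, if_neg (by omega), zero_mul, mul_zero]

theorem det_wronskianMatrix_genY {n : ℕ} (hΦ : ContDiffOn ℝ n Φ s) (hΦ0 : ∀ y ∈ s, Φ y ≠ 0)
    (hx₀ : x₀ ∈ s) :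
    (wronskianMatrix (fun j : Fin (n + 1) => genY Φ j x₀) x₀).det =
      (∏ k ∈ range (n + 1), (k ! : ℝ)) * Φ x₀ ^ ((n + 1) / 2) := by
  have htri : (wronskianMatrix (fun j : Fin (n + 1) => genY Φ j x₀) x₀).IsLowerTriangular :=
    fun i j (hij : i < j) => by
      rw [wronskianMatrix, Matrix.of_apply, iteratedDeriv_genY hs hΦ hΦ0 hx₀ (by omega) hij.le,
        if_neg (Fin.val_ne_of_ne hij.ne)]
  rw [Matrix.det_of_isLowerTriangular _ htri, ← prod_factorial_mul_pow_mod_two,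
    ← Fin.prod_univ_eq_prod_range]
  refine prod_congr rfl fun i _ => ?_
  rw [wronskianMatrix, Matrix.of_apply, iteratedDeriv_genY hs hΦ hΦ0 hx₀ (by omega) le_rfl,
    if_pos rfl]

end genY

theorem stmt_16 (a b : ℝ) (n : ℕ) (Φ : ℝ → ℝ)
    (hΦ : ContDiffOn ℝ n Φ (Set.Ioo a b))
    (hΦ0 : ∀ y ∈ Set.Ioo a b, Φ y ≠ 0) (x₀ : ℝ) (hx₀ : x₀ ∈ Set.Ioo a b) :
    (∀ m ≤ n, iteratedDeriv m (genY Φ m x₀) x₀ =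
      if m % 2 = 1 then (m.factorial : ℝ) * Φ x₀ else (m.factorial : ℝ)) ∧
    Matrix.det (Matrix.of fun i j : Fin (n + 1) =>
        iteratedDeriv (i : ℕ) (genY Φ (j : ℕ) x₀) x₀) =
      (∏ k ∈ Finset.range (n + 1), (k.factorial : ℝ)) * Φ x₀ ^ ((n + 1) / 2) ∧
    LinearIndependent ℝ (fun j : Fin (n + 1) => genY Φ (j : ℕ) x₀) := by
  have hdet := det_wronskianMatrix_genY isOpen_Ioo hΦ hΦ0 hx₀
  refine ⟨fun m hm => ?_, hdet, ?_⟩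
  · rw [iteratedDeriv_genY isOpen_Ioo hΦ hΦ0 hx₀ hm le_rfl, if_pos rfl]
    rcases Nat.mod_two_eq_zero_or_one m with h | h <;> simp [h]
  · refine linearIndependent_of_det_wronskianMatrix_ne_zero (x := x₀) (fun j => ?_) ?_
    · exact ((contDiffOn_genY isOpen_Ioo hΦ hΦ0 hx₀ j).contDiffAt
        (isOpen_Ioo.mem_nhds hx₀)).of_le le_self_add
    · rw [hdet]
      exact mul_ne_zero (prod_ne_zero_iff.mpr fun k _ => by positivity)
        (pow_ne_zero _ (hΦ0 x₀ hx₀))
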